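/- arXiv:2102.09367 — 3 statements merged into one kernel-verified Lean document; each statement's English description precedes it below -/
import Mathlib

section
/- Let I = (h₁,…,h_r) ⊂ ℝ[x] and let g₁,…,g_k generate the real radical √[ℝ]{I}. Then there exists d₀ such that for all d ≥ d₀ and every σ ∈ L_{2d}(±h), each gᵢ lies in Ann_d(σ); consequently √[ℝ]{I} ⊆ (Ann_d(σ)) for all such σ. -/
/-!
If `g^{2m} + s ∈ (h)` with `s` a sum of squares, then once `d` exceeds the degrees in a
representation `g^{2m} + s = ∑ cⱼ hⱼ` and in a sum-of-squares decomposition of `s`, every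
`σ ∈ L_{2d}(±h)` kills `g^{2m} + s` and is nonnegative on both summands, so `σ(g^{2m}) = 0`.
Cauchy–Schwarz for the positive semidefinite form `(u, v) ↦ σ(uv)` then descends through
`σ(g^{j+1} g^{j-1}) = σ((g^j)²)` to `σ(g²) = 0`, and finally gives `σ(g f) = 0` for all `f` of
degree `≤ d`. Finitely many generators need only finitely many bounds.
-/

open MvPolynomial

/-- The real radical of an ideal `I ⊆ ℝ[x₁,…,xₙ]`. -/
def realRadical {n : ℕ} (I : Ideal (MvPolynomial (Fin n) ℝ)) : Set (MvPolynomial (Fin n) ℝ) :=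
  {p | ∃ (m : ℕ) (s : MvPolynomial (Fin n) ℝ), IsSumSq s ∧ p ^ (2 * m) + s ∈ I}

/-- The truncated annihilator `Ann_d(σ)`. -/
def Ann {n : ℕ} (σ : MvPolynomial (Fin n) ℝ →ₗ[ℝ] ℝ) (d : ℕ) : Set (MvPolynomial (Fin n) ℝ) :=
  {f | f.totalDegree ≤ d ∧ ∀ g : MvPolynomial (Fin n) ℝ, g.totalDegree ≤ d → σ (f * g) = 0}

/-- Membership in the truncated cone `L_{2d}(±h)`. -/
def MemL {n r : ℕ} (h : Fin r → MvPolynomial (Fin n) ℝ) (d : ℕ)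
    (σ : MvPolynomial (Fin n) ℝ →ₗ[ℝ] ℝ) : Prop :=
  (∀ f : MvPolynomial (Fin n) ℝ, f.totalDegree ≤ d → 0 ≤ σ (f ^ 2)) ∧
    ∀ (i : Fin r) (q : MvPolynomial (Fin n) ℝ),
      (q * h i).totalDegree ≤ 2 * d → σ (q * h i) = 0

open Filter

section PositiveFunctionals

variable {R ι : Type*} [Field R] [LinearOrder R] [IsStrictOrderedRing R]

def PosSemidefUpTo (σ : MvPolynomial ι R →ₗ[R] R) (d : ℕ) : Prop :=
  ∀ f : MvPolynomial ι R, f.totalDegree ≤ d → 0 ≤ σ (f ^ 2)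

namespace PosSemidefUpTo

variable {σ : MvPolynomial ι R →ₗ[R] R} {d : ℕ}

-- Cauchy–Schwarz: `t ↦ σ((u + t v)²) = 2 t σ(uv) + t² σ(v²)` is nonnegative, so its
-- discriminant `4 σ(uv)²` is not positive.
theorem map_mul_eq_zero_of_map_sq_eq_zero (hσ : PosSemidefUpTo σ d)
    {u v : MvPolynomial ι R} (hu : u.totalDegree ≤ d) (hv : v.totalDegree ≤ d)
    (hu0 : σ (u ^ 2) = 0) : σ (u * v) = 0 := by
  have hquad : ∀ t : R, 0 ≤ σ (v ^ 2) * (t * t) + 2 * σ (u * v) * t + 0 := fun t => by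
    have hdeg : (u + t • v).totalDegree ≤ d :=
      (totalDegree_add _ _).trans (max_le hu ((totalDegree_smul_le _ _).trans hv))
    have hexp : (u + t • v) ^ 2 = u ^ 2 + (2 * t) • (u * v) + (t * t) • v ^ 2 := by
      simp only [smul_eq_C_mul, map_mul, map_ofNat]
      ring
    have := hσ _ hdeg
    rw [hexp, map_add, map_add, map_smul, map_smul, hu0, smul_eq_mul, smul_eq_mul] at this
    linarith
  have := discrim_le_zero hquad
  rw [discrim, mul_zero, sub_zero, mul_pow] at this
  exact pow_eq_zero_iff two_ne_zero |>.1 <| le_antisymm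
    (nonpos_of_mul_nonpos_right this (by norm_num)) (sq_nonneg _)

theorem map_sq_eq_zero_of_map_pow_sq_eq_zero (hσ : PosSemidefUpTo σ d) {g : MvPolynomial ι R}
    {j : ℕ} (hj : (j + 1) * g.totalDegree ≤ d) (h0 : σ ((g ^ (j + 1)) ^ 2) = 0) :
    σ (g ^ 2) = 0 := by
  induction j with
  | zero => simpa using h0
  | succ j ih =>
    have hj' : (j + 1) * g.totalDegree ≤ d := le_trans (Nat.mul_le_mul_right _ (by omega)) hj
    refine ih hj' ?_
    have hmul : g ^ (j + 1 + 1) * g ^ j = (g ^ (j + 1)) ^ 2 := by ring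
    have hdeg : (g ^ j).totalDegree ≤ d :=
      (totalDegree_pow g j).trans (le_trans (Nat.mul_le_mul_right _ (by omega)) hj)
    rw [← hmul]
    exact hσ.map_mul_eq_zero_of_map_sq_eq_zero ((totalDegree_pow _ _).trans hj) hdeg h0

theorem map_mul_eq_zero_of_map_sq_add_eq_zero (hσ : PosSemidefUpTo σ d)
    {g s f : MvPolynomial ι R} {m : ℕ} (hm : (m + 1) * g.totalDegree ≤ d)
    (hf : f.totalDegree ≤ d) (hs : 0 ≤ σ s) (h0 : σ ((g ^ (m + 1)) ^ 2 + s) = 0) :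
    σ (g * f) = 0 := by
  have hpow : σ ((g ^ (m + 1)) ^ 2) = 0 := by
    have := hσ _ ((totalDegree_pow _ _).trans hm)
    rw [map_add] at h0
    linarith
  have hg : g.totalDegree ≤ d := (Nat.le_mul_of_pos_left _ m.succ_pos).trans hm
  exact hσ.map_mul_eq_zero_of_map_sq_eq_zero hg hf (hσ.map_sq_eq_zero_of_map_pow_sq_eq_zero hm hpow)

end PosSemidefUpTo

theorem IsSumSq.eventually_map_nonneg {s : MvPolynomial ι R} (hs : IsSumSq s) :
    ∀ᶠ d in atTop, ∀ σ : MvPolynomial ι R →ₗ[R] R, PosSemidefUpTo σ d → 0 ≤ σ s := by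
  induction hs with
  | zero => exact .of_forall fun _ σ _ => (map_zero σ).ge
  | @sq_add a s _ ih =>
    filter_upwards [eventually_ge_atTop a.totalDegree, ih] with d hd hs σ hσ
    rw [map_add, ← sq]
    exact add_nonneg (hσ a hd) (hs σ hσ)

end PositiveFunctionals

theorem eventually_map_eq_zero_of_mem_span {R ι κ : Type*} [CommRing R] [Fintype κ]
    {h : κ → MvPolynomial ι R} {p : MvPolynomial ι R} (hp : p ∈ Ideal.span (Set.range h)) :
    ∀ᶠ d in atTop, ∀ σ : MvPolynomial ι R →ₗ[R] R,
      (∀ i q, (q * h i).totalDegree ≤ 2 * d → σ (q * h i) = 0) → σ p = 0 := by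
  obtain ⟨c, rfl⟩ := Ideal.mem_span_range_iff_exists_fun.1 hp
  filter_upwards [eventually_all.2 fun i => eventually_ge_atTop (c i * h i).totalDegree]
    with d hd σ hσ
  rw [map_sum]
  exact Finset.sum_eq_zero fun i _ => hσ i (c i) ((hd i).trans (by omega))

theorem exists_sq_pow_succ_add_mem_of_mem_realRadical {n : ℕ}
    {I : Ideal (MvPolynomial (Fin n) ℝ)} {p : MvPolynomial (Fin n) ℝ} (hp : p ∈ realRadical I) :
    ∃ (m : ℕ) (s : MvPolynomial (Fin n) ℝ), IsSumSq s ∧ (p ^ (m + 1)) ^ 2 + s ∈ I := by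
  obtain ⟨m, s, hs, hI⟩ := hp
  refine ⟨m, p * p * s, (IsSumSq.mul_self p).mul hs, ?_⟩
  rw [show (p ^ (m + 1)) ^ 2 + p * p * s = p ^ 2 * (p ^ (2 * m) + s) by ring]
  exact I.mul_mem_left _ hI

theorem eventually_mem_Ann_of_mem_realRadical {n r : ℕ} {h : Fin r → MvPolynomial (Fin n) ℝ}
    {p : MvPolynomial (Fin n) ℝ} (hp : p ∈ realRadical (Ideal.span (Set.range h))) :
    ∀ᶠ d in atTop, ∀ σ : MvPolynomial (Fin n) ℝ →ₗ[ℝ] ℝ, MemL h d σ → p ∈ Ann σ d := by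
  obtain ⟨m, s, hs, hI⟩ := exists_sq_pow_succ_add_mem_of_mem_realRadical hp
  filter_upwards [eventually_ge_atTop ((m + 1) * p.totalDegree), hs.eventually_map_nonneg,
    eventually_map_eq_zero_of_mem_span hI] with d hm hsd hId σ ⟨hpsd, hvanish⟩
  exact ⟨(Nat.le_mul_of_pos_left _ m.succ_pos).trans hm, fun f hf =>
    PosSemidefUpTo.map_mul_eq_zero_of_map_sq_add_eq_zero (σ := σ) hpsd hm hf (hsd σ hpsd)
      (hId σ hvanish)⟩

/-- If `g₁,…,g_k` generate `√[ℝ]{(h)}`, then there is `d₀` such that for all `d ≥ d₀` and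
all `σ ∈ L_{2d}(±h)`, each `gᵢ ∈ Ann_d(σ)`; consequently `√[ℝ]{(h)} ⊆ (Ann_d(σ))`. -/
theorem realRadical_subset_span_ann_eventually {n r k : ℕ}
    (h : Fin r → MvPolynomial (Fin n) ℝ) (g : Fin k → MvPolynomial (Fin n) ℝ)
    (hg : ((Ideal.span (Set.range g) : Ideal (MvPolynomial (Fin n) ℝ)) :
        Set (MvPolynomial (Fin n) ℝ)) = realRadical (Ideal.span (Set.range h))) :
    ∃ d₀ : ℕ, ∀ d ≥ d₀, ∀ σ : MvPolynomial (Fin n) ℝ →ₗ[ℝ] ℝ, MemL h d σ →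
      (∀ i, g i ∈ Ann σ d) ∧
        realRadical (Ideal.span (Set.range h)) ⊆
          ((Ideal.span (Ann σ d) : Ideal (MvPolynomial (Fin n) ℝ)) :
            Set (MvPolynomial (Fin n) ℝ)) := by
  obtain ⟨d₀, hd₀⟩ := eventually_atTop.1 <| eventually_all.2 fun i =>
    eventually_mem_Ann_of_mem_realRadical (by rw [← hg]; exact Ideal.subset_span ⟨i, rfl⟩)
  refine ⟨d₀, fun d hd σ hσ => ⟨fun i => hd₀ d hd i σ hσ, ?_⟩⟩
  rw [← hg]
  exact Ideal.span_le.2 <| Set.range_subset_iff.2 fun i => Ideal.subset_span (hd₀ d hd i σ hσ)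
end

section
/- A positive semidefinite linear functional σ on ℝ[x]_{2d} with σ(g^(2m) + s) = 0, where s is a sum of squares and deg g^(2m), deg s ≤ 2d, satisfies σ(g^(2m)) = 0 and, if 2^j·deg g ≤ d for the relevant powers, g ∈ Ann_d(σ). -/
/-!
Since `σ` is nonnegative on sums of squares, `σ(g^(2^m) + s) = 0` forces `σ(g^(2^m)) = 0`.
For a functional that is nonnegative on squares of a subspace `V`, `σ(f²) = 0` with `f ∈ V`
implies `σ(f h) = 0` for every `h ∈ V`: otherwise `t ↦ σ((t f + h)²) = 2 t σ(f h) + σ(h²)` would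
be a nonconstant affine function that is bounded below. Taking `h = 1` lowers
`σ(g^(2^(j+1))) = 0` to `σ(g^(2^j)) = 0` as long as `g^(2^j) ∈ V`, down to `σ(g²) = 0`, and a
last application with `f = g` shows `g ∈ Ann_d(σ)`.
-/

open MvPolynomial

lemma map_nonneg_of_mem_addSubmonoidClosure {M N F : Type*} [AddCommMonoid M]
    [AddCommMonoid N] [PartialOrder N] [IsOrderedAddMonoid N] [FunLike F M N]
    [AddMonoidHomClass F M N] (φ : F) {S : Set M} (hS : ∀ x ∈ S, 0 ≤ φ x) {x : M}
    (hx : x ∈ AddSubmonoid.closure S) : 0 ≤ φ x :=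
  AddSubmonoid.closure_induction hS (by simp)
    (fun _ _ _ _ ha hb => by rw [map_add]; exact add_nonneg ha hb) hx

section PositiveFunctional

variable {𝕜 A : Type*} [Field 𝕜] [LinearOrder 𝕜] [IsStrictOrderedRing 𝕜] [CommRing A]
  [Algebra 𝕜 A] {σ : A →ₗ[𝕜] 𝕜} {V : Submodule 𝕜 A}

lemma eq_zero_of_forall_nonneg_mul_add {a b : 𝕜} (h : ∀ t, 0 ≤ a * t + b) : a = 0 := by
  by_contra ha
  have := h (-(b + 1) / a)
  rw [mul_div_cancel₀ _ ha] at this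
  linarith

lemma map_mul_eq_zero_of_map_sq_eq_zero (hpsd : ∀ v ∈ V, 0 ≤ σ (v ^ 2)) {f h : A}
    (hf : f ∈ V) (hh : h ∈ V) (hf0 : σ (f ^ 2) = 0) : σ (f * h) = 0 := by
  have hquad : ∀ t : 𝕜, 0 ≤ (2 * σ (f * h)) * t + σ (h ^ 2) := fun t => by
    have hexp : (t • f + h) ^ 2 = (t * t) • f ^ 2 + (2 * t) • (f * h) + h ^ 2 := by
      simp only [Algebra.smul_def, map_mul, map_ofNat]
      ring
    have := hpsd (t • f + h) (V.add_mem (V.smul_mem t hf) hh)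
    rw [hexp, map_add, map_add, map_smul, map_smul, hf0, smul_eq_mul, smul_eq_mul] at this
    linarith
  simpa using eq_zero_of_forall_nonneg_mul_add hquad

lemma map_pow_two_pow_eq_zero_of_le (hpsd : ∀ v ∈ V, 0 ≤ σ (v ^ 2)) (h1 : (1 : A) ∈ V)
    {g : A} {m : ℕ} (hV : ∀ j < m, g ^ 2 ^ j ∈ V) (hgm : σ (g ^ 2 ^ m) = 0) {j : ℕ}
    (hj : j ≤ m) : σ (g ^ 2 ^ j) = 0 := by
  induction hj using Nat.decreasingInduction with
  | self => exact hgm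
  | of_succ k hk ih =>
    simpa using map_mul_eq_zero_of_map_sq_eq_zero hpsd (hV k hk) h1
      (by rwa [← pow_mul, ← pow_succ])

end PositiveFunctional

theorem psd_annihilates_of_sos_relation_general {n d : ℕ} (σ : MvPolynomial (Fin n) ℝ →ₗ[ℝ] ℝ)
    (hpsd : ∀ f : MvPolynomial (Fin n) ℝ, f.totalDegree ≤ d → 0 ≤ σ (f ^ 2))
    (g s : MvPolynomial (Fin n) ℝ) (m : ℕ) (hm : 1 ≤ m)
    (hs : s ∈ AddSubmonoid.closure
      {q : MvPolynomial (Fin n) ℝ | ∃ p, p.totalDegree ≤ d ∧ q = p ^ 2})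
    (hzero : σ (g ^ 2 ^ m + s) = 0)
    (hdeg : ∀ j < m, 2 ^ j * g.totalDegree ≤ d) :
    σ (g ^ 2 ^ m) = 0 ∧ g ∈ Ann σ d := by
  set V := restrictTotalDegree (Fin n) ℝ d
  have hV : ∀ p, p ∈ V ↔ p.totalDegree ≤ d := mem_restrictTotalDegree (Fin n) d
  have hpsdV : ∀ v ∈ V, 0 ≤ σ (v ^ 2) := fun v hv => hpsd v ((hV _).1 hv)
  have hpowV : ∀ j < m, g ^ 2 ^ j ∈ V := fun j hj =>
    (hV _).2 ((totalDegree_pow _ _).trans (hdeg j hj))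
  have hg : g.totalDegree ≤ d := by simpa using hdeg 0 hm
  have hs0 : 0 ≤ σ s :=
    map_nonneg_of_mem_addSubmonoidClosure σ (by rintro _ ⟨p, hp, rfl⟩; exact hpsd p hp) hs
  have htop : 0 ≤ σ (g ^ 2 ^ m) := by
    obtain ⟨k, rfl⟩ := Nat.exists_eq_add_of_le' hm
    rw [pow_succ, pow_mul]
    exact hpsdV _ (hpowV k k.lt_succ_self)
  have hgm : σ (g ^ 2 ^ m) = 0 := by
    rw [map_add] at hzero
    linarith
  have hg2 : σ (g ^ 2) = 0 := by
    simpa using map_pow_two_pow_eq_zero_of_le hpsdV ((hV 1).2 (by simp)) hpowV hgm hm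
  exact ⟨hgm, hg, fun h hh =>
    map_mul_eq_zero_of_map_sq_eq_zero hpsdV ((hV g).2 hg) ((hV h).2 hh) hg2⟩

/-- A psd linear functional `σ` on `ℝ[x]_{2d}` with `σ(g^(2^m) + s) = 0`, where `s` is a
sum of squares of polynomials of degree ≤ d, satisfies `σ(g^(2^m)) = 0`, and if
`2^j·deg g ≤ d` for the relevant powers `j < m` (with `m ≥ 1`), then `g ∈ Ann_d(σ)`. -/
theorem psd_annihilates_of_sos_relation {n d : ℕ} (σ : MvPolynomial (Fin n) ℝ →ₗ[ℝ] ℝ)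
    (hpsd : ∀ f : MvPolynomial (Fin n) ℝ, f.totalDegree ≤ d → 0 ≤ σ (f ^ 2))
    (g s : MvPolynomial (Fin n) ℝ) (m : ℕ) (hm : 1 ≤ m)
    (hs : s ∈ AddSubmonoid.closure
      {q : MvPolynomial (Fin n) ℝ | ∃ p, p.totalDegree ≤ d ∧ q = p ^ 2})
    (hdeg2d : (g ^ 2 ^ m).totalDegree ≤ 2 * d) (hsdeg : s.totalDegree ≤ 2 * d)
    (hzero : σ (g ^ 2 ^ m + s) = 0)
    (hdeg : ∀ j < m, 2 ^ j * g.totalDegree ≤ d) :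
    σ (g ^ 2 ^ m) = 0 ∧ g ∈ Ann σ d :=
  psd_annihilates_of_sos_relation_general σ hpsd g s m hm hs hzero hdeg
end

section
/- Sign Changing Criterion (one direction): if f ∈ ℝ[x₁,…,xₙ] is irreducible and changes sign on ℝⁿ (there exist points a, b ∈ ℝⁿ with f(a)·f(b) < 0), then the principal ideal (f) is real radical. -/
/-
The heart of the matter is that `f` divides every polynomial `g` vanishing on its zero set.
After an affine change of coordinates `f` changes sign along the `x₁`-direction, and by
continuity also on every nearby parallel line, where the intermediate value theorem yields a
zero of `f`, hence of `g`. Viewing `f` and `g` as polynomials in `x₁` over `R = ℝ[x₂, …, xₙ]`,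
if `f ∤ g` then by Gauss's lemma they are coprime over `Frac R`, so their resultant `r ∈ R` is
nonzero and of the form `A f + B g`; but `r` vanishes at every nearby `(x₂, …, xₙ)`, so `r = 0`.
If `p^(2m) + s ∈ (f)`, both nonnegative summands vanish on the zero set of `f`, hence so does `p`.
-/

open MvPolynomial Filter Topology

open scoped Polynomial

/-- An ideal `I ⊆ ℝ[x₁,…,xₙ]` is real radical if whenever `p^(2m) + s ∈ I`
with `s` a sum of squares, then `p ∈ I`. -/
def IsRealRadical {n : ℕ} (I : Ideal (MvPolynomial (Fin n) ℝ)) : Prop :=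
  ∀ (p : MvPolynomial (Fin n) ℝ) (m : ℕ) (s : MvPolynomial (Fin n) ℝ),
    IsSumSq s → p ^ (2 * m) + s ∈ I → p ∈ I

theorem IsSumSq.map {R S F : Type*} [NonUnitalNonAssocSemiring R] [NonUnitalNonAssocSemiring S]
    [FunLike F R S] [NonUnitalRingHomClass F R S] (f : F) {s : R} (hs : IsSumSq s) :
    IsSumSq (f s) := by
  induction hs with
  | zero => simp
  | sq_add a _ ih => simpa using ih.sq_add (f a)

theorem exists_eq_zero_of_mul_nonpos {f : ℝ → ℝ} (hf : Continuous f) {s t : ℝ}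
    (hst : f s * f t ≤ 0) : ∃ r, f r = 0 := by
  have h0 : (0 : ℝ) ∈ Set.uIcc (f s) (f t) := by
    rcases mul_nonpos_iff.mp hst with h | h
    · exact Set.mem_uIcc.mpr (Or.inr ⟨h.2, h.1⟩)
    · exact Set.mem_uIcc.mpr (Or.inl h)
  obtain ⟨r, -, hr⟩ := intermediate_value_uIcc hf.continuousOn h0
  exact ⟨r, hr⟩

theorem exists_linearEquiv_apply_eq {K V : Type*} [Field K] [AddCommGroup V] [Module K V]
    {v w : V} (hv : v ≠ 0) (hw : w ≠ 0) : ∃ g : V ≃ₗ[K] V, g v = w := by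
  obtain ⟨g, hg⟩ := Submodule.exists_linearEquiv_restrict_eq
    ((LinearEquiv.toSpanNonzeroSingleton K V v hv).symm.trans
      (LinearEquiv.toSpanNonzeroSingleton K V w hw))
  have hv1 : (LinearEquiv.toSpanNonzeroSingleton K V v hv).symm
      ⟨v, Submodule.mem_span_singleton_self v⟩ = 1 := LinearEquiv.coord_self K V v hv
  exact ⟨g, by simpa [hv1] using (hg ⟨v, Submodule.mem_span_singleton_self v⟩).symm⟩

theorem exists_affineEquiv_apply_eq_apply_eq {K V : Type*} [Field K] [AddCommGroup V]
    [Module K V] {p q a b : V} (hpq : p ≠ q) (hab : a ≠ b) :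
    ∃ A : V ≃ᵃ[K] V, A p = a ∧ A q = b := by
  obtain ⟨g, hg⟩ := exists_linearEquiv_apply_eq (K := K) (sub_ne_zero.mpr hpq.symm)
    (sub_ne_zero.mpr hab.symm)
  refine ⟨((AffineEquiv.vaddConst K p).symm.trans g.toAffineEquiv).trans
    (AffineEquiv.vaddConst K a), ?_, ?_⟩ <;> simp [hg]

theorem Polynomial.resultant_ne_zero_of_irreducible_of_not_dvd {R : Type*} [CommRing R]
    [IsDomain R] [IsGCDMonoid R] {F G : R[X]} (hF : Irreducible F) (hdeg : F.natDegree ≠ 0)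
    (hFG : ¬F ∣ G) : F.resultant G ≠ 0 := by
  let K := FractionRing R
  have hinj := IsFractionRing.injective R K
  have hprim := hF.isPrimitive hdeg
  have hcop : IsCoprime (F.map (algebraMap R K)) (G.map (algebraMap R K)) :=
    (hprim.irreducible_iff_irreducible_map_fraction_map.mp hF).coprime_iff_not_dvd.mpr
      fun h ↦ hFG (hprim.dvd_of_fraction_map_dvd_fraction_map h)
  have := resultant_ne_zero _ _ hcop
  rwa [natDegree_map_eq_of_injective hinj, natDegree_map_eq_of_injective hinj,
    resultant_map_map, map_ne_zero_iff _ hinj] at this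

namespace MvPolynomial

theorem eq_zero_of_eval_eventuallyEq_zero {𝕜 σ : Type*} [RCLike 𝕜] [Fintype σ]
    {p : MvPolynomial σ 𝕜} {x₀ : σ → 𝕜} (h : (eval · p) =ᶠ[𝓝 x₀] 0) : p = 0 :=
  funext fun x ↦ by
    simpa using (AnalyticOnNhd.eval_mvPolynomial p).eqOn_zero_of_preconnected_of_eventuallyEq_zero
      isPreconnected_univ (Set.mem_univ x₀) h (Set.mem_univ x)

section Affine

variable {R σ τ : Type*} [CommRing R] [Fintype σ] [DecidableEq σ]

noncomputable def comapAffineMap (φ : (σ → R) →ᵃ[R] (τ → R)) :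
    MvPolynomial τ R →ₐ[R] MvPolynomial σ R :=
  aeval fun i ↦ C (φ 0 i) + ∑ k, C (φ.linear (Pi.single k 1) i) * X k

theorem eval_comapAffineMap (φ : (σ → R) →ᵃ[R] (τ → R)) (x : σ → R) (p : MvPolynomial τ R) :
    eval x (comapAffineMap φ p) = eval (φ x) p := by
  have hlin : φ.linear x = ∑ k, x k • φ.linear (Pi.single k 1) := by
    conv_lhs => rw [← (Pi.basisFun R σ).sum_repr x]
    simp
  have hφ : φ x = φ.linear x + φ 0 := by simpa using φ.map_vadd 0 x
  show eval₂Hom (RingHom.id R) x (bind₁ _ p) = _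
  rw [eval₂Hom_bind₁]
  refine congrArg (fun y ↦ eval y p) (_root_.funext fun i ↦ ?_)
  simp [hφ, hlin, add_comm, mul_comm]

variable [IsDomain R] [Infinite R] [Fintype τ] [DecidableEq τ]

noncomputable def comapAffineEquiv (e : (σ → R) ≃ᵃ[R] (τ → R)) :
    MvPolynomial τ R ≃ₐ[R] MvPolynomial σ R :=
  AlgEquiv.ofAlgHom (comapAffineMap e.toAffineMap) (comapAffineMap e.symm.toAffineMap)
    (AlgHom.ext fun p ↦ funext fun x ↦ by simp [eval_comapAffineMap])
    (AlgHom.ext fun p ↦ funext fun x ↦ by simp [eval_comapAffineMap])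

theorem eval_comapAffineEquiv (e : (σ → R) ≃ᵃ[R] (τ → R)) (x : σ → R) (p : MvPolynomial τ R) :
    eval x (comapAffineEquiv e p) = eval (e x) p :=
  eval_comapAffineMap _ _ _

end Affine

theorem natDegree_finSuccEquiv_ne_zero_of_mul_eval_cons_neg {N : ℕ}
    {F : MvPolynomial (Fin (N + 1)) ℝ} {s t : ℝ} {c : Fin N → ℝ}
    (hsign : eval (Fin.cons s c) F * eval (Fin.cons t c) F < 0) :
    (finSuccEquiv ℝ N F).natDegree ≠ 0 := by
  intro h
  have hconst (r : ℝ) : eval (Fin.cons r c) F = eval c ((finSuccEquiv ℝ N F).coeff 0) := by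
    rw [eval_eq_eval_mv_eval', Polynomial.eq_C_of_natDegree_eq_zero h]
    simp
  rw [hconst, hconst] at hsign
  exact (mul_self_nonneg _).not_gt hsign

theorem dvd_of_eval_eq_zero_of_mul_eval_cons_neg {N : ℕ}
    {F G : MvPolynomial (Fin (N + 1)) ℝ} (hF : Irreducible F) {s t : ℝ} {c₀ : Fin N → ℝ}
    (hsign : eval (Fin.cons s c₀) F * eval (Fin.cons t c₀) F < 0)
    (hFG : ∀ x, eval x F = 0 → eval x G = 0) : F ∣ G := by
  by_contra hdvd
  set F' := finSuccEquiv ℝ N F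
  set G' := finSuccEquiv ℝ N G
  have hdeg : F'.natDegree ≠ 0 := natDegree_finSuccEquiv_ne_zero_of_mul_eval_cons_neg hsign
  have hres : F'.resultant G' ≠ 0 :=
    Polynomial.resultant_ne_zero_of_irreducible_of_not_dvd (hF.map _) hdeg
      fun h ↦ hdvd ((map_dvd_iff (finSuccEquiv ℝ N)).mp h)
  obtain ⟨A, B, -, -, hAB⟩ :=
    Polynomial.exists_mul_add_mul_eq_C_resultant F' G' le_rfl le_rfl (.inl hdeg)
  have hcont (r : ℝ) : Continuous fun c : Fin N → ℝ ↦ eval (Fin.cons r c : Fin (N + 1) → ℝ) F :=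
    (continuous_eval F).comp (by fun_prop)
  have hnear : ∀ᶠ c in 𝓝 c₀, eval (Fin.cons s c) F * eval (Fin.cons t c) F < 0 :=
    ((hcont s).mul (hcont t)).continuousAt.eventually (Iio_mem_nhds hsign)
  refine hres (eq_zero_of_eval_eventuallyEq_zero (x₀ := c₀) ?_)
  filter_upwards [hnear] with c hc
  obtain ⟨r, hr⟩ := exists_eq_zero_of_mul_nonpos
    (f := fun r ↦ eval (Fin.cons r c : Fin (N + 1) → ℝ) F)
    ((continuous_eval F).comp (by fun_prop)) hc.le
  have hAB_eval := congrArg (fun P ↦ (P.map (eval c)).eval r) hAB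
  simp only [Polynomial.map_add, Polynomial.map_mul, Polynomial.eval_add, Polynomial.eval_mul,
    Polynomial.map_C, Polynomial.eval_C, F', G', ← eval_eq_eval_mv_eval'] at hAB_eval
  rw [hr, hFG _ hr] at hAB_eval
  simpa using hAB_eval.symm

theorem dvd_of_eval_eq_zero_of_mul_eval_neg {n : ℕ} {f g : MvPolynomial (Fin n) ℝ}
    (hf : Irreducible f) {a b : Fin n → ℝ} (hsign : eval a f * eval b f < 0)
    (hfg : ∀ x, eval x f = 0 → eval x g = 0) : f ∣ g := by
  have hab : a ≠ b := by
    rintro rfl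
    exact (mul_self_nonneg _).not_gt hsign
  obtain ⟨N, rfl⟩ : ∃ N, n = N + 1 := Nat.exists_eq_succ_of_ne_zero fun hn ↦ by
    subst hn
    exact hab (Subsingleton.elim a b)
  obtain ⟨A, hA₀, hA₁⟩ := exists_affineEquiv_apply_eq_apply_eq (K := ℝ)
    (p := Fin.cons 0 0) (q := Fin.cons 1 0) (by simp) hab
  let φ := comapAffineEquiv A
  refine (map_dvd_iff φ).mp (dvd_of_eval_eq_zero_of_mul_eval_cons_neg (hf.map φ) (s := 0) (t := 1)
    (c₀ := 0) ?_ fun x hx ↦ ?_)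
  · simpa [φ, eval_comapAffineEquiv, hA₀, hA₁] using hsign
  · simp_all [φ, eval_comapAffineEquiv]

end MvPolynomial

/-- Sign Changing Criterion (one direction): if `f` is irreducible and changes sign on `ℝⁿ`,
then the principal ideal `(f)` is real radical. -/
theorem sign_changing_criterion {n : ℕ} (f : MvPolynomial (Fin n) ℝ)
    (hirr : Irreducible f) (a b : Fin n → ℝ) (hsign : eval a f * eval b f < 0) :
    IsRealRadical (Ideal.span {f}) := by
  intro p m s hs hmem
  rw [Ideal.mem_span_singleton] at hmem ⊢
  refine dvd_of_eval_eq_zero_of_mul_eval_neg hirr hsign fun x hx ↦ ?_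
  obtain ⟨q, hq⟩ := hmem
  have hsum : eval x p ^ (2 * m) + eval x s = 0 := by
    simpa [hx] using congrArg (eval x) hq
  have hpow := (add_eq_zero_iff_of_nonneg ((even_two_mul m).pow_nonneg _)
    ((hs.map (eval x)).nonneg)).mp hsum
  exact eq_zero_of_pow_eq_zero hpow.1
end
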